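/- Let Z ⊂ ℝ^d be nonempty compact convex, let r : Z → ℝ be differentiable and convex with Bregman divergence V_z(z') := r(z') − r(z) − ⟨∇r(z), z' − z⟩, and set Γ := max_{z, z' ∈ Z} (r(z) − r(z')). Let g : Z → ℝ^d be monotone, let ε > 0, and let z^0 ∈ Z be a minimizer of r over Z. Suppose K ≥ 1, α_1, …, α_K > 0, and z^1, …, z^K ∈ Z satisfy, for every k ∈ {1,…,K} and all u ∈ Z: ⟨g(z^k), z^k − u⟩ ≤ α_k·[V_{z^{k−1}}(u) − V_{z^k}(u) − V_{z^{k−1}}(z^k)] + ε. If S := Σ_{k=1}^K α_k⁻¹ ≥ Γ/ε, then for all u ∈ Z: (1/S)·Σ_{k=1}^K α_k⁻¹ ⟨g(z^k), z^k − u⟩ ≤ (1/S)·(Γ − Σ_{k=1}^K V_{z^{k−1}}(z^k)) + ε ≤ 2ε. -/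

import Mathlib

/-!
Divide the `k`-th oracle inequality by `α k` and sum: the terms `V_{z^{k-1}}(u) - V_{z^k}(u)`
telescope to `V_{z^0}(u) - V_{z^K}(u)`. Convexity of `r` makes Bregman divergences between points
of `Z` nonnegative, and first-order optimality of the minimizer `z^0` gives
`V_{z^0}(u) ≤ r(u) - r(z^0) ≤ Γ`. Dividing by `S` and using `Γ ≤ S ε` yields both bounds.
-/

open RealInnerProductSpace Finset

/-- `breg r gr z z'` is the paper's `V_z(z')`. -/
noncomputable def breg {d : ℕ} (r : EuclideanSpace ℝ (Fin d) → ℝ)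
    (gr : EuclideanSpace ℝ (Fin d) → EuclideanSpace ℝ (Fin d))
    (z z' : EuclideanSpace ℝ (Fin d)) : ℝ :=
  r z' - r z - ⟪gr z, z' - z⟫

section FirstOrder

variable {E : Type*} [NormedAddCommGroup E] [NormedSpace ℝ E]
  {s : Set E} {f : E → ℝ} {f' : StrongDual ℝ E} {x y : E}

/-- Restricting `f` to the segment `[x, y]` reduces this to the one-dimensional fact that a
convex function lies above its tangent line. -/
theorem ConvexOn.le_sub_of_hasFDerivWithinAt (hf : ConvexOn ℝ s f) (hx : x ∈ s) (hy : y ∈ s)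
    (hf' : HasFDerivWithinAt f f' s x) : f' (y - x) ≤ f y - f x := by
  have hmaps : Set.MapsTo (AffineMap.lineMap x y) (Set.Icc (0 : ℝ) 1) s :=
    hf.1.mapsTo_lineMap hx hy
  have hconv : ConvexOn ℝ (Set.Icc (0 : ℝ) 1) (f ∘ AffineMap.lineMap x y) :=
    (hf.comp_affineMap _).subset hmaps (convex_Icc 0 1)
  have hderiv :
      HasDerivWithinAt (f ∘ AffineMap.lineMap x y) (f' (y - x)) (Set.Icc (0 : ℝ) 1) 0 :=
    hf'.comp_hasDerivWithinAt_of_eq 0 AffineMap.hasDerivWithinAt_lineMap hmaps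
      (AffineMap.lineMap_apply_zero x y).symm
  simpa [slope_def_field] using
    hconv.le_slope_of_hasDerivWithinAt (by simp) (by simp) one_pos hderiv

theorem IsMinOn.apply_sub_nonneg_of_hasFDerivWithinAt (h : IsMinOn f s x) (hs : Convex ℝ s)
    (hx : x ∈ s) (hy : y ∈ s) (hf' : HasFDerivWithinAt f f' s x) : 0 ≤ f' (y - x) :=
  h.localize.hasFDerivWithinAt_nonneg hf'
    (sub_mem_posTangentConeAt_of_segment_subset (hs.segment_subset hx hy))

end FirstOrder

theorem IsCompact.sub_le_sSup_image_sub {X : Type*} [TopologicalSpace X] {s : Set X}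
    {f : X → ℝ} (hs : IsCompact s) (hf : ContinuousOn f s) {a b : X} (ha : a ∈ s)
    (hb : b ∈ s) :
    f a - f b ≤ sSup ((fun p : X × X => f p.1 - f p.2) '' s ×ˢ s) := by
  have hcont : ContinuousOn (fun p : X × X => f p.1 - f p.2) (s ×ˢ s) :=
    (hf.comp continuousOn_fst fun _ hp => hp.1).sub (hf.comp continuousOn_snd fun _ hp => hp.2)
  exact le_csSup ((hs.prod hs).bddAbove_image hcont) ⟨(a, b), ⟨ha, hb⟩, rfl⟩

theorem Finset.sum_Icc_one_pred_sub {M : Type*} [AddCommGroup M] (f : ℕ → M) (K : ℕ) :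
    ∑ k ∈ Icc 1 K, (f (k - 1) - f k) = f 0 - f K := by
  induction K with
  | zero => simp
  | succ K ih => rw [sum_Icc_succ_top (Nat.le_add_left 1 K), ih]; simp

section Bregman

variable {d : ℕ} {Z : Set (EuclideanSpace ℝ (Fin d))} {r : EuclideanSpace ℝ (Fin d) → ℝ}
  {gr : EuclideanSpace ℝ (Fin d) → EuclideanSpace ℝ (Fin d)}
  {x y : EuclideanSpace ℝ (Fin d)}

theorem breg_nonneg (hr : ConvexOn ℝ Z r) (hgr : HasGradientAt r (gr x) x) (hx : x ∈ Z)
    (hy : y ∈ Z) : 0 ≤ breg r gr x y := by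
  have := hr.le_sub_of_hasFDerivWithinAt hx hy hgr.hasFDerivAt.hasFDerivWithinAt
  simp only [InnerProductSpace.toDual_apply_apply] at this
  unfold breg
  linarith

theorem breg_le_sub_of_isMinOn (hZ : Convex ℝ Z) (hmin : IsMinOn r Z x)
    (hgr : HasGradientAt r (gr x) x) (hx : x ∈ Z) (hy : y ∈ Z) :
    breg r gr x y ≤ r y - r x := by
  have := hmin.apply_sub_nonneg_of_hasFDerivWithinAt hZ hx hy hgr.hasFDerivAt.hasFDerivWithinAt
  simp only [InnerProductSpace.toDual_apply_apply] at this
  unfold breg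
  linarith

end Bregman

theorem sum_inv_mul_le_of_le_mul_sub_add {K : ℕ} {a D B α : ℕ → ℝ} {ε : ℝ}
    (hα : ∀ k ∈ Icc 1 K, 0 < α k)
    (h : ∀ k ∈ Icc 1 K, a k ≤ α k * (D (k - 1) - D k - B k) + ε) :
    ∑ k ∈ Icc 1 K, (α k)⁻¹ * a k
      ≤ D 0 - D K - ∑ k ∈ Icc 1 K, B k + (∑ k ∈ Icc 1 K, (α k)⁻¹) * ε := by
  calc ∑ k ∈ Icc 1 K, (α k)⁻¹ * a k
      ≤ ∑ k ∈ Icc 1 K, ((D (k - 1) - D k) - B k + (α k)⁻¹ * ε) := by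
        refine sum_le_sum fun k hk => ?_
        rw [← inv_mul_cancel_left₀ (hα k hk).ne' (D (k - 1) - D k - B k), ← mul_add]
        exact mul_le_mul_of_nonneg_left (h k hk) (inv_nonneg.2 (hα k hk).le)
    _ = D 0 - D K - ∑ k ∈ Icc 1 K, B k + (∑ k ∈ Icc 1 K, (α k)⁻¹) * ε := by
        rw [sum_add_distrib, sum_sub_distrib, sum_Icc_one_pred_sub, sum_mul]

theorem stmt15_general {d : ℕ} (Z : Set (EuclideanSpace ℝ (Fin d)))
    (hZcomp : IsCompact Z) (hZconv : Convex ℝ Z)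
    (r : EuclideanSpace ℝ (Fin d) → ℝ)
    (gr : EuclideanSpace ℝ (Fin d) → EuclideanSpace ℝ (Fin d))
    (hgr : ∀ z ∈ Z, HasGradientAt r (gr z) z)
    (hrconv : ConvexOn ℝ Z r)
    (g : EuclideanSpace ℝ (Fin d) → EuclideanSpace ℝ (Fin d))
    (ε : ℝ) (hε : 0 < ε)
    (K : ℕ)
    (zs : ℕ → EuclideanSpace ℝ (Fin d)) (α : ℕ → ℝ)
    (hz0mem : zs 0 ∈ Z) (hz0min : ∀ z ∈ Z, r (zs 0) ≤ r z)
    (hmem : ∀ k ∈ Finset.Icc 1 K, zs k ∈ Z)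
    (hα : ∀ k ∈ Finset.Icc 1 K, 0 < α k)
    (hvar : ∀ k ∈ Finset.Icc 1 K, ∀ u ∈ Z,
      ⟪g (zs k), zs k - u⟫
        ≤ α k * (breg r gr (zs (k - 1)) u - breg r gr (zs k) u
            - breg r gr (zs (k - 1)) (zs k)) + ε)
    (Γ S : ℝ)
    (hΓ : Γ = sSup ((fun p : EuclideanSpace ℝ (Fin d) × EuclideanSpace ℝ (Fin d) =>
      r p.1 - r p.2) '' (Z ×ˢ Z)))
    (hSdef : S = ∑ k ∈ Finset.Icc 1 K, (α k)⁻¹)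
    (hS : Γ / ε ≤ S) :
    ∀ u ∈ Z,
      S⁻¹ * ∑ k ∈ Finset.Icc 1 K, (α k)⁻¹ * ⟪g (zs k), zs k - u⟫
          ≤ S⁻¹ * (Γ - ∑ k ∈ Finset.Icc 1 K, breg r gr (zs (k - 1)) (zs k)) + ε
        ∧ S⁻¹ * (Γ - ∑ k ∈ Finset.Icc 1 K, breg r gr (zs (k - 1)) (zs k)) + ε ≤ 2 * ε := by
  intro u hu
  have hzs : ∀ k ≤ K, zs k ∈ Z := fun k hk => by
    rcases Nat.eq_zero_or_pos k with rfl | hk0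
    · exact hz0mem
    · exact hmem k (mem_Icc.2 ⟨hk0, hk⟩)
  have hS0 : 0 ≤ S := hSdef ▸ sum_nonneg fun k hk => (inv_pos.2 (hα k hk)).le
  have hΓS : Γ ≤ S * ε := (div_le_iff₀ hε).1 hS
  have hB : 0 ≤ ∑ k ∈ Icc 1 K, breg r gr (zs (k - 1)) (zs k) :=
    sum_nonneg fun k hk => by
      have hkK := (mem_Icc.1 hk).2
      exact breg_nonneg hrconv (hgr _ (hzs _ (by omega))) (hzs _ (by omega)) (hzs k hkK)
  have hV0 : breg r gr (zs 0) u ≤ Γ := by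
    have hr : ContinuousOn r Z := fun z hz => (hgr z hz).continuousAt.continuousWithinAt
    have := hZcomp.sub_le_sSup_image_sub hr hu hz0mem
    have := breg_le_sub_of_isMinOn hZconv hz0min (hgr _ hz0mem) hz0mem hu
    linarith
  have hVK : 0 ≤ breg r gr (zs K) u :=
    breg_nonneg hrconv (hgr _ (hzs K le_rfl)) (hzs K le_rfl) hu
  have hregret := hSdef ▸ sum_inv_mul_le_of_le_mul_sub_add (D := fun k => breg r gr (zs k) u)
    (B := fun k => breg r gr (zs (k - 1)) (zs k)) hα fun k hk => hvar k hk u hu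
  constructor
  · rw [← sub_le_iff_le_add', ← mul_sub, inv_mul_eq_div]
    exact div_le_of_le_mul₀ hS0 hε.le (by linarith)
  · have : S⁻¹ * (Γ - ∑ k ∈ Icc 1 K, breg r gr (zs (k - 1)) (zs k)) ≤ ε := by
      rw [inv_mul_eq_div]
      exact div_le_of_le_mul₀ hS0 hε.le (by linarith)
    linarith

/-- Correctness of the proximal point method with a dynamic approximate
proximal oracle of accuracy `ε`: if `z^0` minimizes `r` over `Z`, the iterates satisfy
the per-iteration variational inequalities, and `S = Σ αₖ⁻¹ ≥ Γ/ε` with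
`Γ = max_{z,z'∈Z}(r(z) − r(z'))`, then the weighted regret is at most `2ε`. -/
theorem stmt15 {d : ℕ} (Z : Set (EuclideanSpace ℝ (Fin d)))
    (hZne : Z.Nonempty) (hZcomp : IsCompact Z) (hZconv : Convex ℝ Z)
    (r : EuclideanSpace ℝ (Fin d) → ℝ)
    (gr : EuclideanSpace ℝ (Fin d) → EuclideanSpace ℝ (Fin d))
    (hgr : ∀ z ∈ Z, HasGradientAt r (gr z) z)
    (hrconv : ConvexOn ℝ Z r)
    (g : EuclideanSpace ℝ (Fin d) → EuclideanSpace ℝ (Fin d))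
    (hmono : ∀ z ∈ Z, ∀ z' ∈ Z, 0 ≤ ⟪g z' - g z, z' - z⟫)
    (ε : ℝ) (hε : 0 < ε)
    (K : ℕ) (hK : 1 ≤ K)
    (zs : ℕ → EuclideanSpace ℝ (Fin d)) (α : ℕ → ℝ)
    (hz0mem : zs 0 ∈ Z) (hz0min : ∀ z ∈ Z, r (zs 0) ≤ r z)
    (hmem : ∀ k ∈ Finset.Icc 1 K, zs k ∈ Z)
    (hα : ∀ k ∈ Finset.Icc 1 K, 0 < α k)
    (hvar : ∀ k ∈ Finset.Icc 1 K, ∀ u ∈ Z,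
      ⟪g (zs k), zs k - u⟫
        ≤ α k * (breg r gr (zs (k - 1)) u - breg r gr (zs k) u
            - breg r gr (zs (k - 1)) (zs k)) + ε)
    (Γ S : ℝ)
    (hΓ : Γ = sSup ((fun p : EuclideanSpace ℝ (Fin d) × EuclideanSpace ℝ (Fin d) =>
      r p.1 - r p.2) '' (Z ×ˢ Z)))
    (hSdef : S = ∑ k ∈ Finset.Icc 1 K, (α k)⁻¹)
    (hS : Γ / ε ≤ S) :
    ∀ u ∈ Z,
      S⁻¹ * ∑ k ∈ Finset.Icc 1 K, (α k)⁻¹ * ⟪g (zs k), zs k - u⟫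
          ≤ S⁻¹ * (Γ - ∑ k ∈ Finset.Icc 1 K, breg r gr (zs (k - 1)) (zs k)) + ε
        ∧ S⁻¹ * (Γ - ∑ k ∈ Finset.Icc 1 K, breg r gr (zs (k - 1)) (zs k)) + ε ≤ 2 * ε :=
  stmt15_general Z hZcomp hZconv r gr hgr hrconv g ε hε K zs α hz0mem hz0min hmem hα hvar Γ S hΓ
    hSdef hS
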